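/- (Bauer–Fike) Let A ∈ ℂ^{n×n} be diagonalizable, A = V Λ V⁻¹ with Λ = diag(λ₁,…,λₙ), and let E ∈ ℂ^{n×n}. Then every eigenvalue λ̃ of à = A + E satisfies min_k |λ̃ − λ_k| ≤ κ(V) ‖E‖₂, where κ(V) = ‖V‖₂ ‖V⁻¹‖₂ and ‖·‖₂ is the spectral (operator 2-)norm. -/

import Mathlib

/-!
Conjugating by `V`, the singular matrix `A + E - μ I` becomes `diag(λₖ - μ) + V⁻¹ E V`. A nonzero
kernel vector `x` of it satisfies `‖diag(λₖ - μ) x‖ = ‖V⁻¹ E V x‖`, where the left side is at least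
`minₖ |λₖ - μ| ‖x‖` and the right side at most `κ(V) ‖E‖₂ ‖x‖`.
-/

open Matrix

noncomputable def specNorm {n : ℕ} (A : Matrix (Fin n) (Fin n) ℂ) : ℝ :=
  ‖Matrix.toEuclideanCLM (𝕜 := ℂ) A‖

namespace Matrix

variable {𝕜 ι : Type*} [RCLike 𝕜] [Fintype ι] [DecidableEq ι]

theorem mul_norm_le_norm_toEuclideanCLM_diagonal_apply {d : ι → 𝕜} {c : ℝ} (hc : 0 ≤ c)
    (hd : ∀ i, c ≤ ‖d i‖) (x : EuclideanSpace 𝕜 ι) :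
    c * ‖x‖ ≤ ‖toEuclideanCLM (𝕜 := 𝕜) (diagonal d) x‖ := by
  refine (sq_le_sq₀ (by positivity) (by positivity)).mp ?_
  simp only [mul_pow, EuclideanSpace.norm_sq_eq, ofLp_toEuclideanCLM, mulVec_diagonal, norm_mul,
    Finset.mul_sum]
  gcongr with i
  exact hd i

theorem exists_norm_le_norm_toEuclideanCLM_of_not_isUnit_diagonal_add {d : ι → 𝕜}
    {M : Matrix ι ι 𝕜} (h : ¬IsUnit (diagonal d + M)) :
    ∃ k, ‖d k‖ ≤ ‖toEuclideanCLM (𝕜 := 𝕜) M‖ := by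
  rw [isUnit_iff_isUnit_det, isUnit_iff_ne_zero, not_not] at h
  obtain ⟨x, hx0, hx⟩ := exists_mulVec_eq_zero_iff.mpr h
  have : Nonempty ι := by
    obtain ⟨i, -⟩ := Function.ne_iff.mp hx0
    exact ⟨i⟩
  obtain ⟨k, hk⟩ := Finite.exists_min fun i ↦ ‖d i‖
  have hx_pos : 0 < ‖(WithLp.toLp 2 x : EuclideanSpace 𝕜 ι)‖ := by simpa using hx0
  refine ⟨k, le_of_mul_le_mul_right ?_ hx_pos⟩
  have hDM : toEuclideanCLM (𝕜 := 𝕜) (diagonal d) (WithLp.toLp 2 x) =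
      -toEuclideanCLM (𝕜 := 𝕜) M (WithLp.toLp 2 x) := by
    rw [eq_neg_iff_add_eq_zero, ← _root_.add_apply, ← map_add,
      toEuclideanCLM_toLp, hx, WithLp.toLp_zero]
  calc ‖d k‖ * ‖WithLp.toLp 2 x‖
      ≤ ‖toEuclideanCLM (𝕜 := 𝕜) (diagonal d) (WithLp.toLp 2 x)‖ :=
        mul_norm_le_norm_toEuclideanCLM_diagonal_apply (norm_nonneg _) hk _
    _ = ‖toEuclideanCLM (𝕜 := 𝕜) M (WithLp.toLp 2 x)‖ := by rw [hDM, norm_neg]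
    _ ≤ ‖toEuclideanCLM (𝕜 := 𝕜) M‖ * ‖WithLp.toLp 2 x‖ := ContinuousLinearMap.le_opNorm _ _

end Matrix

theorem specNorm_mul_le {n : ℕ} (A B : Matrix (Fin n) (Fin n) ℂ) :
    specNorm (A * B) ≤ specNorm A * specNorm B := by
  simpa only [specNorm, map_mul] using norm_mul_le _ _

/-- **Bauer–Fike eigenvalue sensitivity.**  Let `A = V Λ V⁻¹` be
diagonalizable with `Λ = diag(λ₁,…,λₙ)`, and let `E` be a perturbation.
Then every eigenvalue `μ` of `Ã = A + E` (i.e. `Ã − μ I` singular) satisfies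
`min_k |μ − λ_k| ≤ κ(V) ‖E‖₂`, where `κ(V) = ‖V‖₂ ‖V⁻¹‖₂`. -/
theorem bauer_fike
    (n : ℕ) (A V E : Matrix (Fin n) (Fin n) ℂ) (l : Fin n → ℂ)
    (hV : IsUnit V) (hA : A = V * Matrix.diagonal l * V⁻¹)
    (μ : ℂ) (hμ : ¬ IsUnit (A + E - μ • (1 : Matrix (Fin n) (Fin n) ℂ))) :
    ∃ k : Fin n, ‖μ - l k‖ ≤ (specNorm V * specNorm V⁻¹) * specNorm E := by
  have hVinv : V * V⁻¹ = 1 := mul_nonsing_inv V ((isUnit_iff_isUnit_det V).mp hV)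
  set D := diagonal fun k ↦ l k - μ
  have hconj : A + E - μ • (1 : Matrix (Fin n) (Fin n) ℂ) = V * (D + V⁻¹ * E * V) * V⁻¹ := by
    have hD : D = diagonal l - μ • 1 := by
      rw [smul_one_eq_diagonal, diagonal_sub]
    rw [hA, hD]
    calc _ = V * diagonal l * V⁻¹ + (V * V⁻¹) * E * (V * V⁻¹) - μ • (V * V⁻¹) := by
          rw [hVinv]; noncomm_ring
      _ = _ := by noncomm_ring
  have hsing : ¬IsUnit (D + V⁻¹ * E * V) := fun h ↦
    hμ (hconj ▸ (hV.mul h).mul (isUnit_nonsing_inv_iff.mpr hV))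
  obtain ⟨k, hk⟩ := exists_norm_le_norm_toEuclideanCLM_of_not_isUnit_diagonal_add hsing
  refine ⟨k, ?_⟩
  calc ‖μ - l k‖ = ‖l k - μ‖ := norm_sub_rev _ _
    _ ≤ specNorm (V⁻¹ * E * V) := hk
    _ ≤ specNorm (V⁻¹ * E) * specNorm V := specNorm_mul_le _ _
    _ ≤ specNorm V⁻¹ * specNorm E * specNorm V :=
        mul_le_mul_of_nonneg_right (specNorm_mul_le _ _) (norm_nonneg _)
    _ = _ := by ring
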